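/- arXiv:1009.5426 — 4 statements merged into one kernel-verified Lean document; each statement's English description precedes it below -/
import Mathlib

section
/- For every ρ ∈ (0,1), real x ≥ 0, and μ > 0, one has Σ_{n=1}^{⌊x/μ⌋−1} (1−ρ) ρ^n n ≤ (ρ/(1−ρ)) γ(x,ρ) ≤ Σ_{n=1}^{⌈x/μ⌉+1} (1−ρ) ρ^n n, where γ(x,ρ) = 1 − ρ^{x/μ} − ρ^{x/μ}(1−ρ)x/μ. -/
/-!
Write `t = x/μ` and `f(t) = 1 - ρ^t - ρ^t (1-ρ) t`. Summing the arithmetico-geometric series gives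
`Σ_{n=1}^N (1-ρ) ρ^n n = ρ/(1-ρ) f(N)`, so `ρ/(1-ρ) f` interpolates the partial sums. Since
`f'(t) = ρ^t (-log ρ (1 + (1-ρ) t) - (1-ρ)) ≥ ρ^t (1-ρ)² t ≥ 0` by `log ρ ≤ ρ - 1`, the interpolant is
monotone on `[0, ∞)`, and `⌊t⌋ - 1 ≤ t ≤ ⌈t⌉ + 1` gives both bounds.
-/

open Finset Real

theorem sum_Icc_one_sub_mul_pow_mul_eq {K : Type*} [Field K] {ρ : K} (hρ : ρ ≠ 1) (N : ℕ) :
    ∑ n ∈ Icc 1 N, (1 - ρ) * ρ ^ n * (n : K) =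
      ρ / (1 - ρ) * (1 - ρ ^ N - ρ ^ N * (1 - ρ) * N) := by
  have h : (1 : K) - ρ ≠ 0 := sub_ne_zero.mpr hρ.symm
  induction N with
  | zero => simp
  | succ k ih =>
    rw [sum_Icc_succ_top (by omega), ih]
    push_cast
    field_simp
    ring

theorem monotoneOn_one_sub_rpow_sub_rpow_mul {ρ : ℝ} (hρ₀ : 0 < ρ) (hρ₁ : ρ ≤ 1) :
    MonotoneOn (fun t : ℝ => 1 - ρ ^ t - ρ ^ t * (1 - ρ) * t) (Set.Ici 0) := by
  have hderiv (t : ℝ) : HasDerivAt (fun t : ℝ => 1 - ρ ^ t - ρ ^ t * (1 - ρ) * t)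
      (ρ ^ t * (-log ρ * (1 + (1 - ρ) * t) - (1 - ρ))) t := by
    have hpow := (hasStrictDerivAt_const_rpow hρ₀ t).hasDerivAt
    refine (((hasDerivAt_const t (1 : ℝ)).sub hpow).sub
      ((hpow.mul_const (1 - ρ)).mul (hasDerivAt_id' t))).congr_deriv ?_
    ring
  refine monotoneOn_of_hasDerivWithinAt_nonneg (convex_Ici 0)
    (fun t _ => (hderiv t).continuousAt.continuousWithinAt)
    (fun t _ => (hderiv t).hasDerivWithinAt) fun t ht => ?_
  rw [interior_Ici, Set.mem_Ioi] at ht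
  have hlog : log ρ ≤ ρ - 1 := log_le_sub_one_of_pos hρ₀
  have : 0 ≤ -log ρ * (1 + (1 - ρ) * t) - (1 - ρ) := by
    nlinarith [mul_nonneg (sub_nonneg.mpr hρ₁) ht.le]
  positivity

/-- for `ρ ∈ (0,1)`, `μ > 0` and `x ≥ 0`, with
`γ(x,ρ) = 1 - ρ^{x/μ} - ρ^{x/μ}(1-ρ)x/μ` (where `ρ^{x/μ} = exp((x/μ) log ρ)`),
`Σ_{n=1}^{⌊x/μ⌋-1} (1-ρ)ρ^n n ≤ (ρ/(1-ρ)) γ(x,ρ) ≤ Σ_{n=1}^{⌈x/μ⌉+1} (1-ρ)ρ^n n`. -/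
theorem stmt_3 (ρ μ x : ℝ) (hρ : ρ ∈ Set.Ioo (0 : ℝ) 1) (hμ : 0 < μ) (hx : 0 ≤ x) :
    (∑ n ∈ Finset.Icc 1 (⌊x / μ⌋ - 1).toNat, (1 - ρ) * ρ ^ n * (n : ℝ)) ≤
      (ρ / (1 - ρ)) *
        (1 - ρ ^ (x / μ) - ρ ^ (x / μ) * (1 - ρ) * x / μ) ∧
    (ρ / (1 - ρ)) * (1 - ρ ^ (x / μ) - ρ ^ (x / μ) * (1 - ρ) * x / μ) ≤
      ∑ n ∈ Finset.Icc 1 ((⌈x / μ⌉.toNat) + 1), (1 - ρ) * ρ ^ n * (n : ℝ) := by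
  obtain ⟨hρ₀, hρ₁⟩ := hρ
  set f : ℝ → ℝ := fun t => 1 - ρ ^ t - ρ ^ t * (1 - ρ) * t
  have hsum (N : ℕ) : ∑ n ∈ Icc 1 N, (1 - ρ) * ρ ^ n * (n : ℝ) = ρ / (1 - ρ) * f N := by
    simp only [f, rpow_natCast, sum_Icc_one_sub_mul_pow_mul_eq hρ₁.ne]
  have hmono : MonotoneOn (fun t => ρ / (1 - ρ) * f t) (Set.Ici 0) := fun a ha b hb hab =>
    mul_le_mul_of_nonneg_left (monotoneOn_one_sub_rpow_sub_rpow_mul hρ₀ hρ₁.le ha hb hab)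
      (div_nonneg hρ₀.le (sub_nonneg.mpr hρ₁.le))
  set t := x / μ
  have ht : 0 ≤ t := div_nonneg hx hμ.le
  rw [mul_div_assoc, hsum, hsum]
  have hfloor : (((⌊t⌋ - 1).toNat : ℤ) : ℝ) ≤ t := by
    rw [Int.toNat_eq_max]
    push_cast
    exact max_le (by linarith [Int.floor_le t]) ht
  have hceil : t ≤ (((⌈t⌉.toNat : ℤ) : ℝ) + 1) := by
    rw [Int.toNat_eq_max]
    push_cast
    linarith [Int.le_ceil t, le_max_left (⌈t⌉ : ℝ) 0]
  push_cast at hfloor hceil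
  exact ⟨hmono (Set.mem_Ici.mpr (Nat.cast_nonneg _)) ht hfloor,
    hmono ht (Set.mem_Ici.mpr (by positivity)) (by exact_mod_cast hceil)⟩
end

section
/- For ρ ∈ (0,1), μ > 0, and η = 1/4: sup_{0<x<(1−ρ)^{−1/4}} (ρ/(1−ρ)) (1 − ρ^{x/μ} − (1−ρ)(x/μ)ρ^{x/μ}) → 0 as ρ ↑ 1; more precisely this supremum is O((1−ρ)^{1/2}). -/
open Filter Real

/-! With `t = x / μ` and `δ = 1 - ρ`, the bound `1 - ρ ^ s ≤ s δ / ρ` (from `log ρ ≥ 1 - 1 / ρ` and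
`exp u ≥ 1 + u`), used at `s = t` and `s = t + 1`, gives
`ρ (1 - ρ ^ t - δ t ρ ^ t) ≤ δ t (1 - ρ ^ (t + 1)) ≤ δ² t (t + 1) / ρ`, so the expression is at most
`t (t + 1) δ / ρ`. For `x < δ ^ (-1/4)` this is `O(δ ^ (1/2))`. -/

lemma one_sub_rpow_le_mul {ρ s : ℝ} (hρ : 0 < ρ) (hs : 0 ≤ s) :
    1 - ρ ^ s ≤ s * ((1 - ρ) / ρ) := by
  have hlog : 1 - ρ⁻¹ ≤ log ρ := one_sub_inv_le_log_of_pos hρ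
  have hexp : s * log ρ + 1 ≤ ρ ^ s := by
    rw [rpow_def_of_pos hρ, mul_comm]
    exact add_one_le_exp _
  have hδ : (1 - ρ) / ρ = ρ⁻¹ - 1 := by field_simp
  rw [hδ]
  nlinarith

lemma div_one_sub_mul_one_sub_rpow_le {ρ t : ℝ} (hρ₀ : 0 < ρ) (hρ₁ : ρ < 1) (ht : 0 ≤ t) :
    ρ / (1 - ρ) * (1 - ρ ^ t - (1 - ρ) * t * ρ ^ t) ≤ t * (t + 1) * ((1 - ρ) / ρ) := by
  have hδ : 0 < 1 - ρ := sub_pos.mpr hρ₁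
  have hp : ρ * (1 - ρ ^ t) ≤ t * (1 - ρ) := by
    have := mul_le_mul_of_nonneg_left (one_sub_rpow_le_mul hρ₀ ht) hρ₀.le
    rwa [mul_left_comm, mul_div_cancel₀ _ hρ₀.ne'] at this
  have hq : 1 - ρ ^ t * ρ ≤ (t + 1) * ((1 - ρ) / ρ) := by
    rw [← rpow_add_one hρ₀.ne']
    exact one_sub_rpow_le_mul hρ₀ (by linarith)
  calc ρ / (1 - ρ) * (1 - ρ ^ t - (1 - ρ) * t * ρ ^ t)
      ≤ t * (1 - ρ ^ t * ρ) := by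
        rw [div_mul_eq_mul_div, div_le_iff₀ hδ]
        nlinarith
    _ ≤ t * ((t + 1) * ((1 - ρ) / ρ)) := mul_le_mul_of_nonneg_left hq ht
    _ = t * (t + 1) * ((1 - ρ) / ρ) := by ring

lemma div_mul_div_add_one_mul_le_rpow_half {δ x μ : ℝ} (hδ₀ : 0 < δ) (hδ₁ : δ ≤ 1) (hx₀ : 0 ≤ x)
    (hx : x ≤ δ ^ (-(1/4 : ℝ))) (hμ : 0 < μ) :
    x / μ * (x / μ + 1) * δ ≤ (1 / μ ^ 2 + 1 / μ) * δ ^ ((1:ℝ)/2) := by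
  have hsq : x ^ 2 * δ ≤ δ ^ ((1:ℝ)/2) := by
    calc x ^ 2 * δ ≤ (δ ^ (-(1/4 : ℝ))) ^ 2 * δ := by gcongr
      _ = δ ^ ((1:ℝ)/2) := by
        rw [← rpow_natCast, ← rpow_mul hδ₀.le, ← rpow_add_one hδ₀.ne']
        norm_num
  have hlin : x * δ ≤ δ ^ ((1:ℝ)/2) := by
    calc x * δ ≤ δ ^ (-(1/4 : ℝ)) * δ := by gcongr
      _ = δ ^ ((3:ℝ)/4) := by
        rw [← rpow_add_one hδ₀.ne']
        norm_num
      _ ≤ δ ^ ((1:ℝ)/2) := rpow_le_rpow_of_exponent_ge hδ₀ hδ₁ (by norm_num)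
  calc x / μ * (x / μ + 1) * δ = 1 / μ ^ 2 * (x ^ 2 * δ) + 1 / μ * (x * δ) := by
        field_simp
    _ ≤ 1 / μ ^ 2 * δ ^ ((1:ℝ)/2) + 1 / μ * δ ^ ((1:ℝ)/2) := by gcongr
    _ = (1 / μ ^ 2 + 1 / μ) * δ ^ ((1:ℝ)/2) := by ring

lemma div_one_sub_mul_one_sub_rpow_div_le_rpow_half {ρ x μ : ℝ} (hρ₀ : 1 / 2 < ρ) (hρ₁ : ρ < 1)
    (hx₀ : 0 < x) (hx : x < (1 - ρ) ^ (-(1/4 : ℝ))) (hμ : 0 < μ) :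
    ρ / (1 - ρ) * (1 - ρ ^ (x / μ) - (1 - ρ) * (x / μ) * ρ ^ (x / μ)) ≤
      2 * (1 / μ ^ 2 + 1 / μ) * (1 - ρ) ^ ((1:ℝ)/2) := by
  have hδ : 0 < 1 - ρ := sub_pos.mpr hρ₁
  have hhalf : (1 - ρ) / ρ ≤ 2 * (1 - ρ) := by
    rw [div_le_iff₀ (by linarith)]
    nlinarith
  calc _ ≤ x / μ * (x / μ + 1) * ((1 - ρ) / ρ) :=
        div_one_sub_mul_one_sub_rpow_le (by linarith) hρ₁ (by positivity)
    _ ≤ x / μ * (x / μ + 1) * (2 * (1 - ρ)) := by gcongr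
    _ = 2 * (x / μ * (x / μ + 1) * (1 - ρ)) := by ring
    _ ≤ 2 * ((1 / μ ^ 2 + 1 / μ) * (1 - ρ) ^ ((1:ℝ)/2)) :=
        mul_le_mul_of_nonneg_left
          (div_mul_div_add_one_mul_le_rpow_half hδ (by linarith) hx₀.le hx.le hμ) two_pos.le
    _ = 2 * (1 / μ ^ 2 + 1 / μ) * (1 - ρ) ^ ((1:ℝ)/2) := by ring

lemma tendsto_one_sub_rpow_nhdsLT :
    Tendsto (fun ρ : ℝ => (1 - ρ) ^ ((1:ℝ)/2)) (nhdsWithin 1 (Set.Iio 1)) (nhds 0) := by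
  have hc : ContinuousAt (fun ρ : ℝ => (1 - ρ) ^ ((1:ℝ)/2)) 1 := by
    fun_prop (disch := norm_num)
  simpa using hc.tendsto.mono_left nhdsWithin_le_nhds

/-- for `μ > 0`,
`sup_{0<x<(1-ρ)^{-1/4}} (ρ/(1-ρ)) (1 - ρ^{x/μ} - (1-ρ)(x/μ) ρ^{x/μ}) → 0` as `ρ ↑ 1`;
more precisely this supremum is `O((1-ρ)^{1/2})`. -/
theorem stmt_12 (μ : ℝ) (hμ : 0 < μ) :
    (∃ C : ℝ, 0 < C ∧ ∀ᶠ ρ : ℝ in nhdsWithin 1 (Set.Iio 1),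
      ∀ x : ℝ, 0 < x → x < (1 - ρ) ^ (-(1/4 : ℝ)) →
        (ρ / (1 - ρ)) * (1 - ρ ^ (x / μ) - (1 - ρ) * (x / μ) * ρ ^ (x / μ)) ≤
          C * (1 - ρ) ^ ((1:ℝ)/2)) ∧
    (∀ ε : ℝ, 0 < ε → ∀ᶠ ρ : ℝ in nhdsWithin 1 (Set.Iio 1),
      ∀ x : ℝ, 0 < x → x < (1 - ρ) ^ (-(1/4 : ℝ)) →
        (ρ / (1 - ρ)) * (1 - ρ ^ (x / μ) - (1 - ρ) * (x / μ) * ρ ^ (x / μ)) ≤ ε) := by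
  set C : ℝ := 2 * (1 / μ ^ 2 + 1 / μ)
  have hbound : ∀ᶠ ρ : ℝ in nhdsWithin 1 (Set.Iio 1),
      ∀ x : ℝ, 0 < x → x < (1 - ρ) ^ (-(1/4 : ℝ)) →
        (ρ / (1 - ρ)) * (1 - ρ ^ (x / μ) - (1 - ρ) * (x / μ) * ρ ^ (x / μ)) ≤
          C * (1 - ρ) ^ ((1:ℝ)/2) := by
    filter_upwards [Ioo_mem_nhdsLT (by norm_num : (1/2 : ℝ) < 1)] with ρ ⟨hρ₀, hρ₁⟩ x hx₀ hx
    exact div_one_sub_mul_one_sub_rpow_div_le_rpow_half hρ₀ hρ₁ hx₀ hx hμ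
  refine ⟨⟨C, by positivity, hbound⟩, fun ε hε => ?_⟩
  have hsmall : ∀ᶠ ρ : ℝ in nhdsWithin 1 (Set.Iio 1), C * (1 - ρ) ^ ((1:ℝ)/2) < ε :=
    (tendsto_one_sub_rpow_nhdsLT.const_mul C).eventually (gt_mem_nhds (by simpa using hε))
  filter_upwards [hbound, hsmall] with ρ hρ hρε x hx₀ hx
  exact (hρ x hx₀ hx).trans hρε.le
end

section
/- Let α > 2, ε > 0 with α − 1 − ε > 0, μ > 0, γ ∈ (0,1), υ ∈ (0,1). Then sup over t > (x^υ log x)^{−1} of exp(−((x − x^γ)/μ − 1)t + log t + (υ + α − 1 + ε) log x) equals exp(−(x^{1−υ}/(μ log x))(1 − x^{γ−1} − μ/x) − log log x + (α−1+ε) log x), and this quantity tends to 0 as x → ∞. -/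
/-!
For `c t₀ ≥ 1` the function `t ↦ -c t + log t` is nonincreasing on `[t₀, ∞)`, since
`log (t / t₀) ≤ t / t₀ - 1 ≤ c (t - t₀)`; so the supremum over `t > t₀` is the value at `t₀`,
which for `c = (x - x^γ)/μ - 1` and `t₀ = (x^υ log x)⁻¹` is the stated expression. The condition
`c t₀ ≥ 1` holds for large `x` because `x^γ`, `μ` and `x^υ log x` are all `o(x)`.
For large `x` the exponent is at most `(α - 1 + ε) log x - x^(1-υ) / (2 μ log x)`, which tends
to `-∞` because `x^(1-υ) / (log x)² → ∞` as `1 - υ > 0`.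
-/

open Filter Real Set Topology

lemma neg_mul_add_log_le_of_le {c t₀ t : ℝ} (ht₀ : 0 < t₀) (hc : 1 ≤ c * t₀) (ht : t₀ ≤ t) :
    -c * t + log t ≤ -c * t₀ + log t₀ := by
  have ht_pos : 0 < t := ht₀.trans_le ht
  have hlog : log t - log t₀ ≤ t / t₀ - 1 := by
    rw [← log_div ht_pos.ne' ht₀.ne']
    exact log_le_sub_one_of_pos (div_pos ht_pos ht₀)
  have hlin : t / t₀ - 1 ≤ c * (t - t₀) := by
    rw [div_sub_one ht₀.ne', div_le_iff₀ ht₀]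
    nlinarith [mul_le_mul_of_nonneg_right hc (sub_nonneg.2 ht)]
  linarith

theorem isLUB_exp_neg_mul_add_log {c t₀ : ℝ} (b : ℝ) (ht₀ : 0 < t₀) (hc : 1 ≤ c * t₀) :
    IsLUB {y | ∃ t, t₀ < t ∧ y = exp (-c * t + log t + b)} (exp (-c * t₀ + log t₀ + b)) := by
  set f : ℝ → ℝ := fun t => exp (-c * t + log t + b)
  have hset : {y | ∃ t, t₀ < t ∧ y = f t} = f '' Ioi t₀ := by
    ext y
    simp only [mem_ofPred_eq, mem_image, mem_Ioi, eq_comm]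
  have hf : ContinuousWithinAt f (Ioi t₀) t₀ := by
    fun_prop (disch := exact ht₀.ne')
  rw [hset]
  refine isLUB_of_mem_closure ?_
    (hf.mem_closure_image (by rw [closure_Ioi]; exact mem_Ici.2 le_rfl))
  rintro _ ⟨t, ht, rfl⟩
  exact exp_le_exp.2 (add_le_add_left (neg_mul_add_log_le_of_le ht₀ hc (le_of_lt ht)) b)

lemma tendsto_rpow_sub_one_add_div_atTop {γ : ℝ} (hγ : γ < 1) (μ : ℝ) :
    Tendsto (fun x : ℝ => x ^ (γ - 1) + μ / x) atTop (𝓝 0) := by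
  have h := (tendsto_rpow_neg_atTop (sub_pos.2 hγ)).add
    ((tendsto_const_nhds (x := μ)).div_atTop tendsto_id)
  simpa only [neg_sub, add_zero, id] using h

lemma eventually_rpow_add_add_mul_rpow_mul_log_lt {γ υ : ℝ} (hγ : γ < 1) (hυ : υ < 1) (μ : ℝ) :
    ∀ᶠ x : ℝ in atTop, x ^ γ + μ + μ * (x ^ υ * log x) < x := by
  have h : Tendsto (fun x : ℝ => x ^ (γ - 1) + μ / x + μ * (log x / x ^ (1 - υ))) atTop (𝓝 0) := by
    simpa using (tendsto_rpow_sub_one_add_div_atTop hγ μ).add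
      ((isLittleO_log_rpow_atTop (sub_pos.2 hυ)).tendsto_div_nhds_zero.const_mul μ)
  filter_upwards [h.eventually_lt_const one_pos, eventually_gt_atTop 0] with x hlt hx
  have hx' : 0 < x ^ υ := rpow_pos_of_pos hx υ
  have hmul : (x ^ (γ - 1) + μ / x + μ * (log x / x ^ (1 - υ))) * x =
      x ^ γ + μ + μ * (x ^ υ * log x) := by
    rw [rpow_sub_one hx.ne', rpow_sub hx, rpow_one]
    field_simp
  nlinarith

lemma neg_mul_inv_add_log_inv_eq {x μ γ υ : ℝ} (hx : 1 < x) (hμ : μ ≠ 0) :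
    -((x - x ^ γ) / μ - 1) * (x ^ υ * log x)⁻¹ + log (x ^ υ * log x)⁻¹ =
      -(x ^ (1 - υ) / (μ * log x)) * (1 - x ^ (γ - 1) - μ / x) - log (log x) - υ * log x := by
  have hx0 : 0 < x := zero_lt_one.trans hx
  have hL : 0 < log x := log_pos hx
  have hX : 0 < x ^ υ := rpow_pos_of_pos hx0 υ
  rw [log_inv, log_mul hX.ne' hL.ne', log_rpow hx0, rpow_sub_one hx0.ne', rpow_sub hx0, rpow_one]
  field_simp
  ring

lemma tendsto_mul_log_sub_rpow_div_mul_log_atBot (K : ℝ) {p C : ℝ} (hp : 0 < p) (hC : 0 < C) :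
    Tendsto (fun x : ℝ => K * log x - x ^ p / (C * log x)) atTop atBot := by
  have hquot : Tendsto (fun x : ℝ => x ^ p / (C * log x ^ 2)) atTop atTop := by
    have h := ((tendsto_exp_mul_div_rpow_atTop 2 p hp).comp tendsto_log_atTop).atTop_div_const hC
    refine h.congr' ?_
    filter_upwards [eventually_gt_atTop 0] with x hx
    simp only [Function.comp, rpow_two, rpow_def_of_pos hx, mul_comm p, div_div, mul_comm C]
  have h := tendsto_log_atTop.atTop_mul_atBot₀
    (tendsto_atBot_add_const_left atTop K (tendsto_neg_atTop_atBot.comp hquot))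
  refine h.congr' ?_
  filter_upwards [eventually_gt_atTop 1] with x hx
  have hL : 0 < log x := log_pos hx
  simp only [Function.comp]
  field_simp
  ring

lemma eventually_neg_rpow_div_mul_log_mul_sub_log_log_le {γ μ : ℝ} (hγ : γ < 1) (hμ : 0 < μ)
    (p K : ℝ) : ∀ᶠ x : ℝ in atTop,
      -(x ^ p / (μ * log x)) * (1 - x ^ (γ - 1) - μ / x) - log (log x) + K * log x ≤
        K * log x - x ^ p / (2 * μ * log x) := by
  filter_upwards [tendsto_log_atTop.eventually_ge_atTop 1,
    (tendsto_rpow_sub_one_add_div_atTop hγ μ).eventually_lt_const one_half_pos,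
    eventually_gt_atTop 0] with x hL hsmall hx
  have hA : 0 ≤ x ^ p / (μ * log x) := by positivity
  have hhalf : x ^ p / (2 * μ * log x) ≤ x ^ p / (μ * log x) * (1 - x ^ (γ - 1) - μ / x) := by
    rw [show x ^ p / (2 * μ * log x) = x ^ p / (μ * log x) * (1 / 2) by field_simp]
    exact mul_le_mul_of_nonneg_left (by linarith) hA
  linarith [log_nonneg hL]

theorem stmt_14_general (α ε μ γ υ : ℝ)
    (hμ : 0 < μ) (hγ : γ ∈ Set.Ioo (0 : ℝ) 1) (hυ : υ ∈ Set.Ioo (0 : ℝ) 1) :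
    (∀ᶠ x : ℝ in atTop,
      IsLUB {y : ℝ | ∃ t : ℝ, (x ^ υ * Real.log x)⁻¹ < t ∧
          y = Real.exp (-((x - x ^ γ) / μ - 1) * t + Real.log t +
                (υ + α - 1 + ε) * Real.log x)}
        (Real.exp (-(x ^ (1 - υ) / (μ * Real.log x)) * (1 - x ^ (γ - 1) - μ / x) -
            Real.log (Real.log x) + (α - 1 + ε) * Real.log x))) ∧
    Tendsto (fun x : ℝ =>
        Real.exp (-(x ^ (1 - υ) / (μ * Real.log x)) * (1 - x ^ (γ - 1) - μ / x) -
          Real.log (Real.log x) + (α - 1 + ε) * Real.log x)) atTop (nhds 0) := by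
  constructor
  · filter_upwards [eventually_gt_atTop 1,
      eventually_rpow_add_add_mul_rpow_mul_log_lt hγ.2 hυ.2 μ] with x hx hlt
    have ht₀ : 0 < x ^ υ * log x := mul_pos (rpow_pos_of_pos (zero_lt_one.trans hx) υ) (log_pos hx)
    have hc : 1 ≤ ((x - x ^ γ) / μ - 1) * (x ^ υ * log x)⁻¹ := by
      rw [← div_eq_mul_inv, one_le_div ht₀, le_sub_iff_add_le, le_div_iff₀ hμ]
      linarith
    convert isLUB_exp_neg_mul_add_log ((υ + α - 1 + ε) * log x) (inv_pos.2 ht₀) hc using 2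
    rw [neg_mul_inv_add_log_inv_eq hx hμ.ne']
    ring
  · refine tendsto_exp_atBot.comp (tendsto_atBot_mono' atTop ?_
      (tendsto_mul_log_sub_rpow_div_mul_log_atBot (α - 1 + ε) (sub_pos.2 hυ.2)
        (mul_pos two_pos hμ)))
    exact eventually_neg_rpow_div_mul_log_mul_sub_log_log_le hγ.2 hμ (1 - υ) (α - 1 + ε)

/-- for `α > 2`, `ε > 0` with `α - 1 - ε > 0`, `μ > 0`, `γ, υ ∈ (0,1)`:
eventually in `x`, the supremum over `t > (x^υ log x)⁻¹` of
`exp(-((x - x^γ)/μ - 1) t + log t + (υ + α - 1 + ε) log x)` equals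
`exp(-(x^{1-υ}/(μ log x))(1 - x^{γ-1} - μ/x) - log log x + (α-1+ε) log x)`,
and this quantity tends to `0` as `x → ∞`. -/
theorem stmt_14 (α ε μ γ υ : ℝ) (hα : 2 < α) (hε : 0 < ε) (hαε : 0 < α - 1 - ε)
    (hμ : 0 < μ) (hγ : γ ∈ Set.Ioo (0 : ℝ) 1) (hυ : υ ∈ Set.Ioo (0 : ℝ) 1) :
    (∀ᶠ x : ℝ in atTop,
      IsLUB {y : ℝ | ∃ t : ℝ, (x ^ υ * Real.log x)⁻¹ < t ∧
          y = Real.exp (-((x - x ^ γ) / μ - 1) * t + Real.log t +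
                (υ + α - 1 + ε) * Real.log x)}
        (Real.exp (-(x ^ (1 - υ) / (μ * Real.log x)) * (1 - x ^ (γ - 1) - μ / x) -
            Real.log (Real.log x) + (α - 1 + ε) * Real.log x))) ∧
    Tendsto (fun x : ℝ =>
        Real.exp (-(x ^ (1 - υ) / (μ * Real.log x)) * (1 - x ^ (γ - 1) - μ / x) -
          Real.log (Real.log x) + (α - 1 + ε) * Real.log x)) atTop (nhds 0) :=
  stmt_14_general α ε μ γ υ hμ hγ hυ
end

section
/- Let L be slowly varying and α > 2, and let F̄(x) = x^{−(α−1)} L(x) = P(X_1 > x). Fix ε ∈ (0,1) and set N(x) = ⌊(1−ε)x/μ⌋ with μ > 0. Then for all large x and all 1 ≤ n ≤ N(x): P(X_1 > x−(n−1)μ)/P(X_1 > x) − 1 ≤ C((n−1)/x + φ(x)) where φ(x) = sup_{ε ≤ t ≤ 1} L(tx)/L(x) − 1 → 0 as x → ∞ and C depends only on α, ε, μ. -/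
/-!
Put `t = 1 - (n - 1) μ / x ∈ [ε, 1]`, so that `x - (n - 1) μ = t x` and
`F̄(t x) / F̄(x) = A R` with `A = t^{-(α-1)}` and `R = L(t x) / L(x) ≤ 1 + φ(x)`, where
`φ(x) = sSup (ratioSet L ε x) - 1`. Bernoulli's inequality `t^{α-1} ≥ 1 - (α - 1)(1 - t)`
gives `A - 1 ≤ (α - 1) ε^{-(α-1)} (1 - t)`, and `A R - 1 = A (R - 1) + (A - 1)` with
`0 ≤ A ≤ ε^{-(α-1)}` combines the two errors.
-/

open Filter Real Set

theorem rpow_neg_sub_one_le {β ε t : ℝ} (hβ : 1 ≤ β) (hε : 0 < ε) (ht : t ∈ Icc ε 1) :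
    t ^ (-β) - 1 ≤ β * ε ^ (-β) * (1 - t) := by
  have ht0 : 0 < t := hε.trans_le ht.1
  have htβ : ε ^ β ≤ t ^ β := rpow_le_rpow hε.le ht.1 (by linarith)
  have hbern : 1 + β * (t - 1) ≤ t ^ β := by
    simpa using one_add_mul_self_le_rpow_one_add (s := t - 1) (by linarith) hβ
  rw [rpow_neg hε.le, rpow_neg ht0.le]
  calc (t ^ β)⁻¹ - 1 = (1 - t ^ β) / t ^ β := by field_simp
    _ ≤ β * (1 - t) / ε ^ β :=
      div_le_div₀ (by nlinarith [ht.2]) (by linarith) (rpow_pos_of_pos hε _) htβ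
    _ = β * (ε ^ β)⁻¹ * (1 - t) := by ring

theorem mul_sub_one_le_of_le {A M a R φ : ℝ} (hA : 0 ≤ A) (hAM : A ≤ M) (hA1 : A - 1 ≤ a)
    (hR : R - 1 ≤ φ) (hφ : 0 ≤ φ) : A * R - 1 ≤ a + M * φ :=
  calc A * R - 1 = A * (R - 1) + (A - 1) := by ring
    _ ≤ M * φ + a := add_le_add ((mul_le_mul_of_nonneg_left hR hA).trans
        (mul_le_mul_of_nonneg_right hAM hφ)) hA1
    _ = a + M * φ := add_comm _ _

theorem tail_div_sub_one_le {β ε x t φ : ℝ} {L F : ℝ → ℝ} (hβ : 1 ≤ β) (hε : 0 < ε)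
    (hF : ∀ x : ℝ, 0 < x → F x = x ^ (-β) * L x) (hx : 0 < x) (ht : t ∈ Icc ε 1)
    (hL : L (t * x) / L x - 1 ≤ φ) (hφ : 0 ≤ φ) :
    F (t * x) / F x - 1 ≤ ε ^ (-β) * (β * (1 - t) + φ) := by
  have ht0 : 0 < t := hε.trans_le ht.1
  have hratio : F (t * x) / F x = t ^ (-β) * (L (t * x) / L x) := by
    rw [hF _ (mul_pos ht0 hx), hF x hx, mul_rpow ht0.le hx.le]
    field_simp [(rpow_pos_of_pos hx (-β)).ne']
  rw [hratio, mul_add, ← mul_assoc, mul_comm (ε ^ (-β)) β]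
  exact mul_sub_one_le_of_le (rpow_nonneg ht0.le _)
    (rpow_le_rpow_of_nonpos hε ht.1 (by linarith)) (rpow_neg_sub_one_le hβ hε ht) hL hφ

theorem one_sub_mul_div_mem_Icc {ε μ x : ℝ} {n : ℕ} (hμ : 0 < μ) (hx : 0 < x) (hn : 1 ≤ n)
    (hnx : (n : ℝ) ≤ ⌊(1 - ε) * x / μ⌋) : 1 - ((n : ℝ) - 1) * μ / x ∈ Icc ε 1 := by
  have hn1 : (1 : ℝ) ≤ n := by exact_mod_cast hn
  have hnμ : (n : ℝ) * μ ≤ (1 - ε) * x := (le_div_iff₀ hμ).mp (hnx.trans (Int.floor_le _))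
  constructor
  · rw [le_sub_comm, div_le_iff₀ hx]; nlinarith
  · have : 0 ≤ ((n : ℝ) - 1) * μ / x := by positivity
    linarith

def ratioSet (L : ℝ → ℝ) (ε x : ℝ) : Set ℝ := {r : ℝ | ∃ t ∈ Icc ε 1, r = L (t * x) / L x}

section ratioSet

variable {L : ℝ → ℝ} {ε x δ : ℝ}

theorem one_mem_ratioSet (hε : ε ≤ 1) (hLx : L x ≠ 0) : 1 ∈ ratioSet L ε x :=
  ⟨1, ⟨hε, le_rfl⟩, by rw [one_mul, div_self hLx]⟩

theorem ratioSet_le (h : ∀ t ∈ Icc ε 1, |L (t * x) / L x - 1| ≤ δ) :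
    ∀ r ∈ ratioSet L ε x, r ≤ 1 + δ := by
  rintro r ⟨t, ht, rfl⟩
  linarith [(abs_le.mp (h t ht)).2]

theorem sSup_ratioSet_mem_Icc (hε : ε ≤ 1) (hLx : L x ≠ 0)
    (h : ∀ t ∈ Icc ε 1, |L (t * x) / L x - 1| ≤ δ) :
    sSup (ratioSet L ε x) ∈ Icc 1 (1 + δ) :=
  ⟨le_csSup ⟨1 + δ, ratioSet_le h⟩ (one_mem_ratioSet hε hLx),
    csSup_le ⟨1, one_mem_ratioSet hε hLx⟩ (ratioSet_le h)⟩

theorem div_le_sSup_ratioSet {t : ℝ} (ht : t ∈ Icc ε 1)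
    (h : ∀ t ∈ Icc ε 1, |L (t * x) / L x - 1| ≤ δ) :
    L (t * x) / L x ≤ sSup (ratioSet L ε x) :=
  le_csSup ⟨1 + δ, ratioSet_le h⟩ ⟨t, ht, rfl⟩

theorem tendsto_sSup_ratioSet (hε : ε ≤ 1) (hLpos : ∀ x : ℝ, 0 < x → 0 < L x)
    (hLunif : ∀ δ : ℝ, 0 < δ → ∀ᶠ x : ℝ in atTop,
      ∀ t ∈ Icc ε 1, |L (t * x) / L x - 1| ≤ δ) :
    Tendsto (fun x ↦ sSup (ratioSet L ε x) - 1) atTop (nhds 0) := by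
  rw [Metric.tendsto_nhds]
  intro δ hδ
  filter_upwards [hLunif (δ / 2) (half_pos hδ), eventually_gt_atTop 0] with x hx hx0
  have h := sSup_ratioSet_mem_Icc hε (hLpos x hx0).ne' hx
  rw [Real.dist_eq, sub_zero, abs_lt]
  constructor <;> linarith [h.1, h.2]

end ratioSet

theorem exists_tail_div_sub_one_le {α ε μ : ℝ} {L F : ℝ → ℝ} (hα : 2 ≤ α)
    (hε : ε ∈ Ioo 0 1) (hμ : 0 < μ) (hLpos : ∀ x : ℝ, 0 < x → 0 < L x)
    (hF : ∀ x : ℝ, 0 < x → F x = x ^ (-(α - 1)) * L x)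
    (hLunif : ∀ᶠ x : ℝ in atTop, ∀ t ∈ Icc ε 1, |L (t * x) / L x - 1| ≤ 1) :
    ∃ C : ℝ, 0 < C ∧ ∀ᶠ x : ℝ in atTop, ∀ n : ℕ, 1 ≤ n → (n : ℝ) ≤ ⌊(1 - ε) * x / μ⌋ →
      F (x - ((n : ℝ) - 1) * μ) / F x - 1 ≤
        C * (((n : ℝ) - 1) / x + (sSup (ratioSet L ε x) - 1)) := by
  obtain ⟨hε0, hε1⟩ := hε
  have hα1 : 0 < α - 1 := by linarith
  refine ⟨ε ^ (-(α - 1)) * ((α - 1) * μ + 1), by positivity, ?_⟩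
  filter_upwards [hLunif, eventually_gt_atTop 0] with x hx hx0 n hn hnx
  set t := 1 - ((n : ℝ) - 1) * μ / x
  have ht : t ∈ Icc ε 1 := one_sub_mul_div_mem_Icc hμ hx0 hn hnx
  have hφ := sSup_ratioSet_mem_Icc hε1.le (hLpos x hx0).ne' hx
  have htx : x - ((n : ℝ) - 1) * μ = t * x := by simp only [t]; field_simp
  have hm : 0 ≤ ((n : ℝ) - 1) / x := div_nonneg (by simp [hn]) hx0.le
  rw [htx]
  refine (tail_div_sub_one_le (by linarith) hε0 hF hx0 ht
    (sub_le_sub_right (div_le_sSup_ratioSet ht hx) 1) (sub_nonneg.mpr hφ.1)).trans ?_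
  have h1t : 1 - t = ((n : ℝ) - 1) / x * μ := by simp only [t]; ring
  rw [h1t, mul_assoc]
  gcongr ε ^ (-(α - 1)) * ?_
  nlinarith [mul_nonneg (mul_nonneg hα1.le hμ.le) (sub_nonneg.mpr hφ.1)]

/-- let `F̄(x) = x^{-(α-1)} L(x)` with `L` slowly varying (with the uniform
convergence `L(tx)/L(x) → 1` on `t ∈ [ε,1]`), `α > 2`, `μ > 0`, `ε ∈ (0,1)` and
`N(x) = ⌊(1-ε)x/μ⌋`. With `φ(x) = sup_{ε ≤ t ≤ 1} L(tx)/L(x) - 1`, one has `φ(x) → 0`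
and there is `C > 0` (depending only on `α, ε, μ`) with, for all large `x` and all
`1 ≤ n ≤ N(x)`, `F̄(x-(n-1)μ)/F̄(x) - 1 ≤ C ((n-1)/x + φ(x))`. -/
theorem stmt_15 (α ε μ : ℝ) (L F : ℝ → ℝ) (hα : 2 < α) (hε : ε ∈ Set.Ioo (0 : ℝ) 1)
    (hμ : 0 < μ)
    (hLpos : ∀ x : ℝ, 0 < x → 0 < L x)
    (hF : ∀ x : ℝ, 0 < x → F x = x ^ (-(α - 1)) * L x)
    (hLunif : ∀ δ : ℝ, 0 < δ → ∀ᶠ x : ℝ in atTop,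
      ∀ t ∈ Set.Icc ε 1, |L (t * x) / L x - 1| ≤ δ) :
    Tendsto (fun x : ℝ =>
        sSup {r : ℝ | ∃ t ∈ Set.Icc ε 1, r = L (t * x) / L x} - 1) atTop (nhds 0) ∧
    ∃ C : ℝ, 0 < C ∧ ∀ᶠ x : ℝ in atTop, ∀ n : ℕ, 1 ≤ n →
      (n : ℝ) ≤ ⌊(1 - ε) * x / μ⌋ →
      F (x - ((n : ℝ) - 1) * μ) / F x - 1 ≤
        C * (((n : ℝ) - 1) / x +
          (sSup {r : ℝ | ∃ t ∈ Set.Icc ε 1, r = L (t * x) / L x} - 1)) :=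
  ⟨tendsto_sSup_ratioSet hε.2.le hLpos hLunif,
    exists_tail_div_sub_one_le hα.le hε hμ hLpos hF (hLunif 1 one_pos)⟩
end
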